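/- arXiv:2305.01970 — 2 statements merged into one kernel-verified Lean document; each statement's English description precedes it below -/
import Mathlib

section
/- Given countably many (or, more generally, at most λ many, indexed by i < i* ≤ λ) equivalence relations E_i, each defined on the set of λ-sequences from a set X with at least two elements, there exists a single equivalence relation E on λ-sequences from X together with, for each i < i*, an injective coding map c_i from λ-sequences to λ-sequences, such that for all sequences a, b: c_i(a) E c_i(b) if and only if a E_i b, and moreover c_i(a) is never E-equivalent to c_j(b) when i ≠ j. -/
/-!
Split `ι` as `ι ⊕ ι`. On the first copy write the characteristic pattern of the point
`e i`, where `e : I ↪ ι`, and on the second copy the sequence itself; this codes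
`I × (ι → X)` injectively into `ι → X`. The relation on `I × (ι → X)` that relates
`(i, a)` and `(j, b)` iff `i = j` and `a E_i b` is an equivalence, and any equivalence
on a type transports along an injection: take the kernel of the map extending the
quotient map by a constant off its range.
-/

open Cardinal

universe u v w

open Function

theorem Setoid.exists_comap_eq_of_injective {γ β : Type*} (r : Setoid γ) {g : γ → β}
    (hg : Injective g) : ∃ s : Setoid β, s.comap g = r := by
  refine ⟨Setoid.ker (extend g (fun p => some (Quotient.mk r p)) fun _ => none), ?_⟩
  ext p q
  simp [Setoid.ker_def, hg.extend_apply, Quotient.eq]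

def Setoid.indexed {I α : Type*} (E : I → α → α → Prop) (hE : ∀ i, Equivalence (E i)) :
    Setoid (I × α) where
  r p q := p.1 = q.1 ∧ E p.1 p.2 q.2
  iseqv := by
    refine ⟨fun p => ⟨rfl, (hE _).refl _⟩, ?_, ?_⟩
    · rintro ⟨i, a⟩ ⟨j, b⟩ ⟨rfl, h⟩
      exact ⟨rfl, (hE i).symm h⟩
    · rintro ⟨i, a⟩ ⟨j, b⟩ ⟨k, c⟩ ⟨rfl, hab⟩ ⟨rfl, hbc⟩
      exact ⟨rfl, (hE i).trans hab hbc⟩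

def tagCode {I κ ι X : Type*} [DecidableEq κ] (e : I → κ) (x y : X) (p : I × (ι → X)) :
    κ ⊕ ι → X :=
  Sum.elim (update (fun _ => y) (e p.1) x) p.2

theorem injective_tagCode {I κ ι X : Type*} [DecidableEq κ] {e : I → κ} (he : Injective e)
    {x y : X} (hxy : x ≠ y) : Injective (tagCode (ι := ι) e x y) := by
  rintro ⟨i, a⟩ ⟨j, b⟩ h
  have hi : update (fun _ => y) (e i) x (e j) = x := by
    simpa [tagCode] using congrFun h (Sum.inl (e j))
  have hij : i = j := by
    by_contra hne
    exact hxy (by simpa [update_of_ne (he.ne (Ne.symm hne))] using hi.symm)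
  exact Prod.ext hij (funext fun k => by simpa [tagCode] using congrFun h (Sum.inr k))

theorem Cardinal.nonempty_sum_self_equiv (ι : Type*) [Infinite ι] : Nonempty (ι ⊕ ι ≃ ι) :=
  Cardinal.eq.mp (by simp [add_eq_self (aleph0_le_mk ι)])

/-- Coding at most `λ` many equivalence relations on `λ`-sequences from `X`
(`|X| ≥ 2`) into a single equivalence relation via injective coding maps. -/
theorem code_many_equivalence_relations {ι : Type u} {X : Type v} {I : Type w} [Infinite ι]
    (hX : ∃ x y : X, x ≠ y) (hI : Cardinal.lift.{u} (Cardinal.mk I) ≤ Cardinal.lift.{w} (Cardinal.mk ι))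
    (E : I → (ι → X) → (ι → X) → Prop) (hE : ∀ i, Equivalence (E i)) :
    ∃ (F : (ι → X) → (ι → X) → Prop) (c : I → (ι → X) → (ι → X)),
      Equivalence F ∧
      (∀ i, Function.Injective (c i)) ∧
      (∀ i a b, F (c i a) (c i b) ↔ E i a b) ∧
      (∀ i j a b, i ≠ j → ¬ F (c i a) (c j b)) := by
  classical
  obtain ⟨x, y, hxy⟩ := hX
  obtain ⟨e⟩ := lift_mk_le'.mp hI
  obtain ⟨s⟩ := nonempty_sum_self_equiv ι
  set g : I × (ι → X) → (ι → X) := fun p => tagCode e x y p ∘ s.symm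
  have hg : Injective g :=
    s.symm.surjective.injective_comp_right.comp (injective_tagCode e.injective hxy)
  obtain ⟨F, hF⟩ := Setoid.exists_comap_eq_of_injective (Setoid.indexed E hE) hg
  have hFg : ∀ p q, F (g p) (g q) ↔ p.1 = q.1 ∧ E p.1 p.2 q.2 := fun p q => by
    rw [← Setoid.comap_rel, hF]; rfl
  refine ⟨F, fun i a => g (i, a), F.iseqv, fun i => hg.comp (Prod.mk_right_injective i),
    fun i a b => by simp [hFg], fun i j a b hij h => hij ((hFg _ _).mp h).1⟩
end

section
/- Independence from sequential goodness: suppose a ternary relation 'C is good over (A, B)' satisfies monotonicity in B (if C is good over (A, B') and B ⊆ B' then C is good over (A, B)) and the base extension property. If A_α is good over (A, ⋃_{i<α} A_i) for each α < n (n finite), then the family ⟨A_α : α < n⟩ is independent over A, where independence is defined by: for each α, A_α is good over (A, ⋃_{i≠α, i<n} A_i). -/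
/-! Add the members of the family to the base of `A α` one at a time, in increasing order,
starting from `⋃_{i<α} A i`. Members below `α` are already there. To add `A β` with `β > α`,
note that `A β` is good over the current base together with `A α`, because that set lies inside
`⋃_{i<β} A i`; exchange then moves `A β` into the base of `A α`. -/

section

variable {U ι : Type*} {good : Set U → Set U → Set U → Prop} {A : Set U} {As : ι → Set U}

theorem good_biUnion_insert_of_exchange
    (hexch : ∀ A₁ A₂ A B, good A₁ A B → good A₂ A (B ∪ A₁) → good A₁ A (B ∪ A₂))
    {α β : ι} {s : Set ι} (hα : good (As α) A (⋃ i ∈ s, As i))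
    (hβ : good (As β) A (⋃ i ∈ insert α s, As i)) :
    good (As α) A (⋃ i ∈ insert β s, As i) := by
  rw [Set.biUnion_insert, Set.union_comm] at hβ ⊢
  exact hexch _ _ _ _ hα hβ

variable [LinearOrder ι]

theorem good_biUnion_Iio_union_of_sequentially_good
    (hmono : ∀ C A B B', good C A B' → B ⊆ B' → good C A B)
    (hexch : ∀ A₁ A₂ A B, good A₁ A B → good A₂ A (B ∪ A₁) → good A₁ A (B ∪ A₂))
    (hgood : ∀ α, good (As α) A (⋃ i ∈ Set.Iio α, As i)) (α : ι) (s : Finset ι) (hαs : α ∉ s) :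
    good (As α) A (⋃ i ∈ Set.Iio α ∪ ↑s, As i) := by
  induction s using Finset.induction_on_max with
  | empty => simpa using hgood α
  | insert β s hs_lt ih =>
    obtain ⟨hβα, hαs⟩ : β ≠ α ∧ α ∉ s := by simpa [eq_comm] using hαs
    rw [Finset.coe_insert, Set.union_insert]
    rcases hβα.lt_or_gt with hβα | hαβ
    · rw [Set.insert_eq_of_mem (Set.mem_union_left _ (Set.mem_Iio.2 hβα))]
      exact ih hαs
    · refine good_biUnion_insert_of_exchange hexch (ih hαs) (hmono _ _ _ _ (hgood β) ?_)
      refine Set.biUnion_subset_biUnion_left (Set.insert_subset hαβ (Set.union_subset ?_ ?_))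
      · exact Set.Iio_subset_Iio hαβ.le
      · exact hs_lt

theorem good_biUnion_ne_of_sequentially_good [Fintype ι]
    (hmono : ∀ C A B B', good C A B' → B ⊆ B' → good C A B)
    (hexch : ∀ A₁ A₂ A B, good A₁ A B → good A₂ A (B ∪ A₁) → good A₁ A (B ∪ A₂))
    (hgood : ∀ α, good (As α) A (⋃ i ∈ Set.Iio α, As i)) (α : ι) :
    good (As α) A (⋃ i ∈ ({α}ᶜ : Set ι), As i) := by
  have hcompl : Set.Iio α ∪ ↑(Finset.univ.erase α) = ({α}ᶜ : Set ι) := by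
    ext i
    simpa using ne_of_lt
  rw [← hcompl]
  exact good_biUnion_Iio_union_of_sequentially_good hmono hexch hgood α _ (Finset.notMem_erase α _)

end

/-- Independence from sequential goodness: if `good` is monotone in its third
argument and satisfies the exchange property, and `A α` is good over
`(A, ⋃_{i<α} A i)` for each `α < n`, then the family is independent over `A`:
each `A α` is good over `(A, ⋃_{i ≠ α} A i)`. -/
theorem independent_of_sequentially_good {U : Type*}
    (good : Set U → Set U → Set U → Prop)
    -- (a) monotonicity in the third argument
    (hmono : ∀ C A B B', good C A B' → B ⊆ B' → good C A B)
    -- (b) exchange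
    (hexch : ∀ A₁ A₂ A B, good A₁ A B → good A₂ A (B ∪ A₁) → good A₁ A (B ∪ A₂))
    (A : Set U) {n : ℕ} (As : Fin n → Set U)
    (hgood : ∀ α : Fin n, good (As α) A (⋃ i : Fin n, ⋃ (_ : i < α), As i)) :
    ∀ α : Fin n, good (As α) A (⋃ i : Fin n, ⋃ (_ : i ≠ α), As i) :=
  good_biUnion_ne_of_sequentially_good hmono hexch hgood
end
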